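/- Let G be a graph, H a set of vertices such that the induced subgraph G[H] contains an independent set S of size t with N_G[S] ⊆ H and α(G[H]) = t. Then α(G) = α(G − H) + t. -/

import Mathlib

/-
An independent set of `G` splits into its parts inside and outside `H`, which are independent
in `G[H]` and `G - H`; this gives `α(G) ≤ α(G - H) + α(G[H]) = α(G - H) + t`. Conversely, since
`N[S] ⊆ H`, no vertex of `S` has a neighbour outside `H`, so `S` together with a maximum
independent set of `G - H` is independent in `G`, of size `α(G - H) + t`.
-/

open SimpleGraph

/-- A finset is independent in `G` if no two distinct members are adjacent. -/
def IsIndepFinset {V : Type*} (G : SimpleGraph V) (s : Finset V) : Prop :=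
  ∀ v ∈ s, ∀ w ∈ s, v ≠ w → ¬ G.Adj v w

/-- The independence number: the largest cardinality of an independent finset. -/
noncomputable def indepNum {V : Type*} (G : SimpleGraph V) : ℕ :=
  sSup {n | ∃ s : Finset V, IsIndepFinset G s ∧ s.card = n}

/-- The closed neighborhood of a vertex, as a finset. -/
def closedNbhd {V : Type*} [Fintype V] [DecidableEq V] (G : SimpleGraph V)
    [DecidableRel G.Adj] (v : V) : Finset V :=
  insert v (G.neighborFinset v)

section closedNbhd

variable {V : Type*} [Fintype V] [DecidableEq V] (G : SimpleGraph V) [DecidableRel G.Adj]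

lemma self_mem_closedNbhd (v : V) : v ∈ closedNbhd G v :=
  Finset.mem_insert_self v _

variable {G} in
lemma mem_closedNbhd_of_adj {v w : V} (h : G.Adj v w) : w ∈ closedNbhd G v :=
  Finset.mem_insert_of_mem ((G.mem_neighborFinset v w).2 h)

end closedNbhd

namespace IsIndepFinset

variable {V : Type*} {G : SimpleGraph V}

lemma subtype {s : Finset V} (h : IsIndepFinset G s) (p : Set V) [DecidablePred (· ∈ p)] :
    IsIndepFinset (G.induce p) (s.subtype (· ∈ p)) := by
  intro v hv w hw hvw
  exact h v (Finset.mem_subtype.1 hv) w (Finset.mem_subtype.1 hw) (Subtype.coe_ne_coe.2 hvw)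

lemma map_subtype {p : Set V} {s : Finset p} (h : IsIndepFinset (G.induce p) s) :
    IsIndepFinset G (s.map (Function.Embedding.subtype _)) := by
  simp only [IsIndepFinset, Finset.forall_mem_map, Function.Embedding.coe_subtype]
  intro v hv w hw hvw
  exact h v hv w hw (Subtype.ext_iff.not.2 hvw)

lemma union [DecidableEq V] {s t : Finset V} (hs : IsIndepFinset G s) (ht : IsIndepFinset G t)
    (hst : ∀ v ∈ s, ∀ w ∈ t, ¬ G.Adj v w) : IsIndepFinset G (s ∪ t) := by
  intro v hv w hw hvw
  rcases Finset.mem_union.1 hv with hv | hv <;> rcases Finset.mem_union.1 hw with hw | hw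
  · exact hs v hv w hw hvw
  · exact hst v hv w hw
  · exact fun hadj => hst w hw v hv hadj.symm
  · exact ht v hv w hw hvw

end IsIndepFinset

section indepNum

variable {V : Type*} [Fintype V] {G : SimpleGraph V}

lemma bddAbove_card_isIndepFinset (G : SimpleGraph V) :
    BddAbove {n | ∃ s : Finset V, IsIndepFinset G s ∧ s.card = n} :=
  ⟨Fintype.card V, fun _ ⟨s, _, hs⟩ => hs ▸ s.card_le_univ⟩

lemma IsIndepFinset.card_le_indepNum {s : Finset V} (h : IsIndepFinset G s) :
    s.card ≤ _root_.indepNum G :=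
  le_csSup (bddAbove_card_isIndepFinset G) ⟨s, h, rfl⟩

lemma exists_isIndepFinset_card_eq_indepNum (G : SimpleGraph V) :
    ∃ s : Finset V, IsIndepFinset G s ∧ s.card = _root_.indepNum G :=
  Nat.sSup_mem (s := {n | ∃ s : Finset V, IsIndepFinset G s ∧ s.card = n})
    ⟨0, ∅, fun _ h => absurd h (Finset.notMem_empty _), rfl⟩ (bddAbove_card_isIndepFinset G)

lemma card_filter_mem_le_indepNum_induce {s : Finset V} (h : IsIndepFinset G s) (p : Set V)
    [DecidablePred (· ∈ p)] : (s.filter (· ∈ p)).card ≤ _root_.indepNum (G.induce p) := by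
  rw [← Finset.card_subtype]
  exact (h.subtype p).card_le_indepNum

lemma indepNum_le_indepNum_induce_compl_add (G : SimpleGraph V) (p : Set V) :
    _root_.indepNum G ≤ _root_.indepNum (G.induce pᶜ) + _root_.indepNum (G.induce p) := by
  classical
  obtain ⟨s, hs, hcard⟩ := exists_isIndepFinset_card_eq_indepNum G
  rw [← hcard, ← Finset.card_filter_add_card_filter_not (· ∈ p), add_comm]
  exact add_le_add (card_filter_mem_le_indepNum_induce hs pᶜ)
    (card_filter_mem_le_indepNum_induce hs p)

lemma indepNum_induce_compl_add_card_le {p : Set V} {S : Finset V}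
    (hS : IsIndepFinset G S) (hSp : ↑S ⊆ p) (hN : ∀ v ∈ S, ∀ w ∉ p, ¬ G.Adj v w) :
    _root_.indepNum (G.induce pᶜ) + S.card ≤ _root_.indepNum G := by
  classical
  obtain ⟨B, hB, hcard⟩ := exists_isIndepFinset_card_eq_indepNum (G.induce pᶜ)
  set B' := B.map (Function.Embedding.subtype _)
  have hB'p : ∀ w ∈ B', w ∉ p := by
    simp only [B', Finset.mem_map, Function.Embedding.coe_subtype]
    rintro _ ⟨w, _, rfl⟩
    exact w.2
  have hdisj : Disjoint B' S :=
    Finset.disjoint_left.2 fun w hw hwS => hB'p w hw (hSp hwS)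
  have hind : IsIndepFinset G (B' ∪ S) :=
    hB.map_subtype.union hS fun w hw v hv hadj => hN v hv w (hB'p w hw) hadj.symm
  calc _root_.indepNum (G.induce pᶜ) + S.card = (B' ∪ S).card := by
        rw [Finset.card_union_of_disjoint hdisj, Finset.card_map, hcard]
    _ ≤ _root_.indepNum G := hind.card_le_indepNum

end indepNum

theorem stmt_9_general {V : Type*} [Fintype V] [DecidableEq V] (G : SimpleGraph V)
    [DecidableRel G.Adj] (H : Finset V) (S : Finset V) (t : ℕ)
    (hScard : S.card = t)
    (hSind : IsIndepFinset G S)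
    (hN : ∀ v ∈ S, closedNbhd G v ⊆ H)
    (hα : _root_.indepNum (G.induce (↑H : Set V)) = t) :
    _root_.indepNum G = _root_.indepNum (G.induce ((↑H : Set V)ᶜ)) + t := by
  subst hScard
  apply le_antisymm
  · exact hα ▸ indepNum_le_indepNum_induce_compl_add G H
  · exact indepNum_induce_compl_add_card_le hSind
      (fun v hv => hN v hv (self_mem_closedNbhd G v))
      fun v hv w hw hadj => hw (hN v hv (mem_closedNbhd_of_adj hadj))

theorem stmt_9 {V : Type*} [Fintype V] [DecidableEq V] (G : SimpleGraph V)
    [DecidableRel G.Adj] (H : Finset V) (S : Finset V) (t : ℕ)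
    (hSH : S ⊆ H) (hScard : S.card = t)
    (hSind : IsIndepFinset G S)
    (hN : ∀ v ∈ S, closedNbhd G v ⊆ H)
    (hα : _root_.indepNum (G.induce (↑H : Set V)) = t) :
    _root_.indepNum G = _root_.indepNum (G.induce ((↑H : Set V)ᶜ)) + t :=
  stmt_9_general G H S t hScard hSind hN hα
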